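/- Let Z(W,Z) be a zoom space, with Z = (Z_i)_{i∈I_W}, and let α ≤ ω₁. Then: (a) for every F ⊆ W, if F ∈ F_α(W), then the set V_F = (F∖I_W) ∪ ⋃{Z_i : i ∈ F∩I_W} belongs to F_α(Z(W,Z)); (b) for every family C = (C_i)_{i∈I_W} with C_i ⊆ Z_i for each i, if C_i ∈ F_α(Z_i) for every i ∈ I_W, then the zoom space Z(W,C) (as a subset of Z(W,Z)) belongs to F_α(Z(W,Z)). -/

import Mathlib

noncomputable section
open Classical Set Topology Filter Ordinal

universe u v

namespace FBorelPaper

/-! ### Ordinal parity -/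

/-- The first uncountable ordinal. -/
def omega1 : Ordinal.{0} := Ordinal.omega 1

/-- An ordinal `a = λ + m` (with `λ` limit or zero, `m < ω`) is *even* iff `m` is even. -/
def EvenOrd (a : Ordinal.{0}) : Prop := a % 2 = 0

/-- An ordinal `a = λ + m` (with `λ` limit or zero, `m < ω`) is *odd* iff `m` is odd. -/
def OddOrd (a : Ordinal.{0}) : Prop := a % 2 = 1

/-- For `a = λ + 2n + i` (with `λ` limit or zero, `n < ω`, `i ∈ {0,1}`),
`ordPrime a = λ + n` (the ordinal `α'` of the paper). -/
def ordPrime (a : Ordinal.{0}) : Ordinal.{0} :=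
  Ordinal.omega0 * (a / Ordinal.omega0) + (a % Ordinal.omega0) / 2

/-! ### The F-Borel hierarchy -/

/-- The `F`-Borel hierarchy of a topological space: `FBorel Y 0` is the family of closed
sets, and for `0 < a`, `FBorel Y a` consists of all countable unions (for odd `a`),
resp. countable intersections (for even `a`), of members of `⋃ b < a, FBorel Y b`. -/
def FBorel (Y : Type u) [TopologicalSpace Y] : Ordinal.{0} → Set (Set Y) :=
  WellFounded.fix Ordinal.lt_wf (C := fun _ => Set (Set Y)) fun a ih =>
    if a = 0 then { F | IsClosed F }
    else if EvenOrd a then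
      { S | ∃ f : ℕ → Set Y, (∀ n, ∃ b, ∃ h : b < a, f n ∈ ih b h) ∧ S = ⋂ n, f n }
    else
      { S | ∃ f : ℕ → Set Y, (∀ n, ∃ b, ∃ h : b < a, f n ∈ ih b h) ∧ S = ⋃ n, f n }

/-- The list `(σ 0, …, σ (k-1))` of the first `k` values of `σ : ℕ → ℕ`. -/
def seqPrefix (σ : ℕ → ℕ) (k : ℕ) : List ℕ := List.ofFn fun i : Fin k => σ i

/-- A Suslin scheme: a monotone family of sets indexed by finite sequences. -/
def IsSuslinScheme {Y : Type u} (C : List ℕ → Set Y) : Prop :=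
  ∀ ⦃s t : List ℕ⦄, s <+: t → C t ⊆ C s

/-- The Suslin operation `A(C) = ⋃_{σ ∈ ω^ω} ⋂_k C(σ|k)`. -/
def suslinOp {Y : Type u} (C : List ℕ → Set Y) : Set Y :=
  ⋃ σ : ℕ → ℕ, ⋂ k : ℕ, C (seqPrefix σ k)

/-- The Suslin-F subsets of `Y`: results of the Suslin operation applied to schemes of
closed sets. -/
def SuslinF (Y : Type u) [TopologicalSpace Y] : Set (Set Y) :=
  { S | ∃ C : List ℕ → Set Y, (∀ s, IsClosed (C s)) ∧ S = suslinOp C }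

/-- The classes `F_a(Y)` for `a ≤ ω₁`, where `F_{ω₁}(Y)` is the class of Suslin-F sets. -/
def FClass (Y : Type u) [TopologicalSpace Y] (a : Ordinal.{0}) : Set (Set Y) :=
  if a < omega1 then FBorel Y a else SuslinF Y

/-- `ComplIn Y X` is the complexity of `X` in `Y`: the least `a ≤ ω₁` with `X ∈ F_a(Y)`. -/
def ComplIn (Y : Type u) [TopologicalSpace Y] (X : Set Y) : Ordinal.{0} :=
  sInf { a : Ordinal.{0} | a ≤ omega1 ∧ X ∈ FClass Y a }

/-! ### Compactifications, K-analytic spaces, local complexity -/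

/-- `(K, e)` is a compactification of `X`: `K` is compact Hausdorff and `e` is a dense
embedding of `X` into `K`. -/
def IsCompactification (X : Type u) [TopologicalSpace X] (K : Type u) [TopologicalSpace K]
    (e : X → K) : Prop :=
  CompactSpace K ∧ T2Space K ∧ IsEmbedding e ∧ DenseRange e

/-- The set `Compl(X)` of all complexities attained by `X` in its compactifications. -/
def AttainedCompl (X : Type u) [TopologicalSpace X] : Set Ordinal.{0} :=
  { γ | ∃ (K : Type u) (_ : TopologicalSpace K) (e : X → K),
      IsCompactification X K e ∧ Set.range e ∈ SuslinF K ∧ γ = ComplIn K (Set.range e) }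

/-- A topological space is K-analytic iff it embeds as a Suslin-F subset of some compact
Hausdorff space. -/
def IsKAnalytic (X : Type u) [TopologicalSpace X] : Prop :=
  ∃ (K : Type u) (_ : TopologicalSpace K) (e : X → K),
    CompactSpace K ∧ T2Space K ∧ IsEmbedding e ∧ Set.range e ∈ SuslinF K

/-- The local complexity `Compl_y(X, Y)`: the least complexity of `cl(U) ∩ X` in `Y` over
all open neighborhoods `U` of `y` in `Y`. -/
def locComplAt (Y : Type u) [TopologicalSpace Y] (X : Set Y) (y : Y) : Ordinal.{0} :=
  sInf { γ : Ordinal.{0} | ∃ U : Set Y, IsOpen U ∧ y ∈ U ∧ γ = ComplIn Y (closure U ∩ X) }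

/-- The local complexity `Compl_loc(X, Y) = sup_{x ∈ X} Compl_x(X, Y)`. -/
def locCompl (Y : Type u) [TopologicalSpace Y] (X : Set Y) : Ordinal.{0} :=
  ⨆ x : X, locComplAt Y X (x : Y)

/-- The local complexity `Compl_locbar(X, Y) = sup_{y ∈ Y} Compl_y(X, Y)`. -/
def locComplBar (Y : Type u) [TopologicalSpace Y] (X : Set Y) : Ordinal.{0} :=
  ⨆ y : Y, locComplAt Y X y

/-! ### Trees on ω -/

/-- A tree on `ω`: a set of finite sequences closed under initial segments. -/
def IsTree (T : Set (List ℕ)) : Prop := ∀ ⦃s t : List ℕ⦄, s <+: t → t ∈ T → s ∈ T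

/-- A tree is well-founded iff it carries no infinite branch. -/
def WellFoundedTree (T : Set (List ℕ)) : Prop := ¬ ∃ σ : ℕ → ℕ, ∀ k : ℕ, seqPrefix σ k ∈ T

/-- `t` is a leaf of `T`: it belongs to `T` and has no immediate successor in `T`. -/
def IsLeafOf (T : Set (List ℕ)) (t : List ℕ) : Prop := t ∈ T ∧ ∀ n : ℕ, t ++ [n] ∉ T

/-- The tree `T^t = {s | t⌢s ∈ T}` corresponding to `t` in `T`. -/
def subtreeAt (T : Set (List ℕ)) (t : List ℕ) : Set (List ℕ) := { s | t ++ s ∈ T }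

/-- The smallest tree containing a set `S` of finite sequences. -/
def clTr (S : Set (List ℕ)) : Set (List ℕ) := { u | ∃ s ∈ S, u <+: s }

/-- The leaf derivative: keep the elements having some proper extension in `T`. -/
def leafDeriv (T : Set (List ℕ)) : Set (List ℕ) := { t ∈ T | ∃ s ∈ T, t <+: s ∧ t ≠ s }

/-- The derivative `D_iie`: keep the `t ∈ T` admitting infinitely many pairwise
incomparable extensions in `T` of pairwise different lengths. -/
def Diie (T : Set (List ℕ)) : Set (List ℕ) :=
  { t ∈ T | ∃ g : ℕ → List ℕ, (∀ n, g n ∈ T ∧ t <+: g n) ∧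
      ∀ ⦃m n : ℕ⦄, m < n →
        (¬ g m <+: g n) ∧ (¬ g n <+: g m) ∧ (g m).length ≠ (g n).length }

/-- Transfinitely iterated derivative, starting from `cl_Tr S` and taking intersections
at limit stages. -/
def iterDeriv (D : Set (List ℕ) → Set (List ℕ)) (S : Set (List ℕ)) (γ : Ordinal.{0}) :
    Set (List ℕ) :=
  Ordinal.limitRecOn γ (clTr S) (fun _ ih => D ih)
    (fun a _ ih => ⋂ b : Ordinal.{0}, ⋂ h : b < a, ih b h)

/-- The rank associated with the leaf derivative: the least `γ` such that the `(γ+1)`-st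
iterated leaf derivative is empty, and `ω₁` if there is no such countable ordinal. -/
def leafRank (T : Set (List ℕ)) : Ordinal.{0} :=
  if ∃ γ : Ordinal.{0}, γ < omega1 ∧ iterDeriv leafDeriv T (γ + 1) = ∅ then
    sInf { γ : Ordinal.{0} | iterDeriv leafDeriv T (γ + 1) = ∅ }
  else omega1

/-- `E` is the canonical extension of the `l(T)`-scheme `H` to the whole of `T`:
it agrees with `H` on the leaves of `T`, and at a non-leaf `t ∈ T` it is the union
(resp. the intersection) of its values at the immediate successors of `t` in `T` when
the leaf-rank of `T^t` is odd (resp. even). -/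
def IsSchemeExtension (Y : Type u) [TopologicalSpace Y] (T : Set (List ℕ))
    (H E : List ℕ → Set Y) : Prop :=
  (∀ t, IsLeafOf T t → E t = H t) ∧
  (∀ t ∈ T, ¬ IsLeafOf T t → OddOrd (leafRank (subtreeAt T t)) →
      E t = ⋃ n ∈ { n : ℕ | t ++ [n] ∈ T }, E (t ++ [n])) ∧
  (∀ t ∈ T, ¬ IsLeafOf T t → EvenOrd (leafRank (subtreeAt T t)) →
      E t = ⋂ n ∈ { n : ℕ | t ++ [n] ∈ T }, E (t ++ [n]))

/-- `H` (an `l(T)`-scheme of subsets of `X`) is a *universal simple `F_α`-representation*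
of `X`: `r_l(T) ≤ α`, and for every space `Y` containing (a copy of) `X`, the extension
of the scheme of closures `(cl_Y (H t))_t` computes `X` at the root. -/
def HasUniversalSimpleRep (X : Type u) [TopologicalSpace X] (α : Ordinal.{0}) : Prop :=
  ∃ (T : Set (List ℕ)) (H : List ℕ → Set X), IsTree T ∧ WellFoundedTree T ∧ [] ∈ T ∧
    leafRank T ≤ α ∧
    ∀ (Y : Type u) (_ : TopologicalSpace Y) (e : X → Y), IsEmbedding e →
      ∃ E : List ℕ → Set Y,
        IsSchemeExtension Y T (fun t => closure (e '' H t)) E ∧ E [] = Set.range e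

/-! ### Canonical trees -/

/-- Auxiliary indices for the canonical trees: at a successor `a = b + 1` every index is
`b`, and at a countable limit the indices enumerate all ordinals `< a` injectively. -/
def canonIdx (a : Ordinal.{0}) (n : ℕ) : Ordinal.{0} :=
  if hs : ∃ b, a = b + 1 then hs.choose
  else if hf : ∃ f : ℕ → Ordinal.{0}, Function.Injective f ∧ Set.range f = Set.Iio a then
    hf.choose n
  else 0

theorem canonIdx_lt {a : Ordinal.{0}} (h0 : a ≠ 0) (n : ℕ) : canonIdx a n < a := by
  unfold canonIdx
  split
  · next hs =>
      conv_rhs => rw [hs.choose_spec]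
      rw [Ordinal.add_one_eq_succ]
      exact Order.lt_succ _
  · split
    · next hf =>
        have hmem : hf.choose n ∈ Set.range hf.choose := Set.mem_range_self n
        rw [hf.choose_spec.2] at hmem
        exact hmem
    · first
        | exact pos_iff_ne_zero.mpr h0
        | exact Ordinal.pos_iff_ne_zero.mpr h0
        | exact lt_of_le_of_ne (Ordinal.zero_le _) (Ne.symm h0)

/-- The canonical "maximal" trees `T_α` of leaf-rank `α < ω₁` (with `T_α = ω^{<ω}` for
`α ≥ ω₁`): `T_0 = {∅}`, `T_{α+1} = {∅} ∪ ⋃_n n⌢T_α`, and at countable limits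
`T_α = {∅} ∪ ⋃_n n⌢T_{π_α(n)}` for an injective enumeration `π_α` of `α`. -/
def canonTree : Ordinal.{0} → Set (List ℕ) :=
  WellFounded.fix Ordinal.lt_wf (C := fun _ => Set (List ℕ)) fun a ih =>
    if h0 : a = 0 then {([] : List ℕ)}
    else if omega1 ≤ a then Set.univ
    else {([] : List ℕ)} ∪ ⋃ n : ℕ, (List.cons n) '' ih (canonIdx a n) (canonIdx_lt h0 n)

/-- The canonical trees `T^c_α`: `T_{α'}` for even `α`, and `{∅} ∪ 1⌢T_{α'}` for odd `α`. -/
def canonTreeC (a : Ordinal.{0}) : Set (List ℕ) :=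
  if EvenOrd a then canonTree (ordPrime a)
  else {([] : List ℕ)} ∪ (List.cons 1) '' canonTree (ordPrime a)

/-- The canonical trees `T^c_{α,i} = {∅} ∪ i⌢T_{α'}` (for odd `α`). -/
def canonTreeCi (a : Ordinal.{0}) (i : ℕ) : Set (List ℕ) :=
  {([] : List ℕ)} ∪ (List.cons i) '' canonTree (ordPrime a)

/-! ### Admissible maps, `R_T` and regular representations -/

/-- An admissible map on a tree `T`: monotone w.r.t. extension, with
`|φ(t)| = t(0) + ⋯ + t(|t|-1)` for all `t ∈ T`. -/
def Admissible (T : Set (List ℕ)) (φ : List ℕ → List ℕ) : Prop :=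
  (∀ ⦃s t : List ℕ⦄, s ∈ T → t ∈ T → s <+: t → φ s <+: φ t) ∧
  (∀ t ∈ T, (φ t).length = t.sum)

/-- `R_T(C)`: the points of `C(∅)` admitting an admissible witness map along `T`. -/
def RT {Y : Type u} (T : Set (List ℕ)) (C : List ℕ → Set Y) : Set Y :=
  { x | x ∈ C [] ∧ ∃ φ : List ℕ → List ℕ, Admissible T φ ∧ ∀ t ∈ T, x ∈ C (φ t) }

/-- `R_α(C) = R_{T^c_α}(C)`. -/
def Ralpha {Y : Type u} (a : Ordinal.{0}) (C : List ℕ → Set Y) : Set Y :=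
  RT (canonTreeC a) C

/-- A Suslin scheme `C` of subsets of `X ⊆ Y` is *complete on `X`*: it is a Suslin scheme
on `X` (it consists of subsets of `X` and the Suslin operation applied to it covers `X`)
such that every nontrivial filter containing, for each `n`, a set `C s` with `|s| = n`,
has an accumulation point in `X`. -/
def IsCompleteOn (Y : Type u) [TopologicalSpace Y] (X : Set Y) (C : List ℕ → Set Y) :
    Prop :=
  IsSuslinScheme C ∧ (∀ s, C s ⊆ X) ∧ X ⊆ suslinOp C ∧
  ∀ F : Filter Y, F.NeBot → (∀ n : ℕ, ∃ s : List ℕ, s.length = n ∧ C s ∈ F) →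
    ∃ x ∈ X, ClusterPt x F

/-- The tree `S_C(y)` of finite sequences `s` with `y ∈ cl_Y (C s)`. -/
def SCtree (Y : Type u) [TopologicalSpace Y] (C : List ℕ → Set Y) (y : Y) :
    Set (List ℕ) :=
  { s : List ℕ | y ∈ closure (C s) }

/-! ### Zoom spaces -/

/-- The set of isolated points of a topological space. -/
def IsolPts (Y : Type u) [TopologicalSpace Y] : Set Y := { y | IsOpen ({y} : Set Y) }

/-- The underlying set of the zoom space `Z(Y, X)`: the non-isolated points of `Y`
together with the disjoint union of the spaces `X i`, `i ∈ I_Y`. -/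
def ZoomCarrier (Y : Type u) [TopologicalSpace Y] (X : IsolPts Y → Type v) :
    Type (max u v) :=
  ({ y : Y // y ∉ IsolPts Y }) ⊕ ((i : IsolPts Y) × X i)

/-- The basic set `V_U ⊆ Z(Y, X)` associated with `U ⊆ Y`:
`V_U = (U ∖ I_Y) ∪ ⋃ {X i | i ∈ U ∩ I_Y}`. -/
def zoomVSet (Y : Type u) [TopologicalSpace Y] (X : IsolPts Y → Type v) (U : Set Y) :
    Set (ZoomCarrier Y X) :=
  { z | Sum.elim (fun y : { y : Y // y ∉ IsolPts Y } => (y : Y) ∈ U)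
      (fun p : (i : IsolPts Y) × X i => (p.1 : Y) ∈ U) z }

/-- The topology of the zoom space `Z(Y, X)`, generated by the open subsets of the
spaces `X i` together with the sets `V_U` for `U` open in `Y`. -/
instance zoomTopology (Y : Type u) [TopologicalSpace Y] (X : IsolPts Y → Type v)
    [∀ i, TopologicalSpace (X i)] : TopologicalSpace (ZoomCarrier Y X) :=
  TopologicalSpace.generateFrom
    ({ B | ∃ (i : IsolPts Y) (W : Set (X i)), IsOpen W ∧
        B = Sum.inr '' ((Sigma.mk i) '' W) } ∪
     { B | ∃ U : Set Y, IsOpen U ∧ B = zoomVSet Y X U })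

/-- The subset of `Z(Y, X)` which is the underlying set of the zoom space `Z(Ys, A)` of
a subspace `Ys ⊆ Y` with respect to subspaces `A i ⊆ X i`
(here the isolated points of `Ys` are identified with those of `Y`). -/
def zoomSub (Y : Type u) [TopologicalSpace Y] (X : IsolPts Y → Type v) (Ys : Set Y)
    (A : ∀ i : IsolPts Y, Set (X i)) : Set (ZoomCarrier Y X) :=
  { z | Sum.elim (fun y : { y : Y // y ∉ IsolPts Y } => (y : Y) ∈ Ys)
      (fun p : (i : IsolPts Y) × X i => p.2 ∈ A p.1) z }

/-! ### Broom sets and broom spaces -/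

/-- A forking sequence: a sequence of nonempty finite sequences with pairwise distinct
first entries. -/
def IsForking (f : ℕ → List ℕ) : Prop :=
  (∀ n, f n ≠ []) ∧ ∀ ⦃m n : ℕ⦄, m ≠ n → (f m).head? ≠ (f n).head?

/-- The hierarchy of finite broom sets: `B ∈ B_α` iff `IsBroomB α B`.
`B_0 = {{∅}}`; for odd `α`, `B_α = B_{<α} ∪ {h⌢B | B ∈ B_{α-1}, h ∈ ω^{<ω}}`; for even
`α > 0`, `B_α = B_{<α} ∪ {⋃_n f_n⌢B_n | B_n ∈ B_{<α}, (f_n) a forking sequence}`. -/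
inductive IsBroomB : Ordinal.{0} → Set (List ℕ) → Prop
  | base : IsBroomB 0 {[]}
  | mono {β α : Ordinal.{0}} {B : Set (List ℕ)} : β < α → IsBroomB β B → IsBroomB α B
  | odd {β : Ordinal.{0}} {B : Set (List ℕ)} (h : List ℕ) : EvenOrd β → IsBroomB β B →
      IsBroomB (β + 1) ((fun s => h ++ s) '' B)
  | even {α : Ordinal.{0}} {f : ℕ → List ℕ} {Bs : ℕ → Set (List ℕ)}
      (g : ℕ → Ordinal.{0}) :
      0 < α → EvenOrd α → IsForking f →
      (∀ n : ℕ, g n < α) → (∀ n : ℕ, IsBroomB (g n) (Bs n)) →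
      IsBroomB α (⋃ n : ℕ, (fun s => f n ++ s) '' Bs n)

/-- The infinite sequence `s⌢ν` obtained by extending the finite sequence `s` by `ν`. -/
def seqAppend (s : List ℕ) (ν : ℕ → ℕ) : ℕ → ℕ :=
  fun k => if h : k < s.length then s.get ⟨k, h⟩ else ν (k - s.length)

/-- `A` is a broom-extension of `B`:
`A = {s⌢f^s_n⌢ν^s_n | s ∈ B, n ∈ ω}` for forking sequences `(f^s_n)_n, s ∈ B`, and
points `ν^s_n ∈ ω^ω`. -/
def IsBroomExtension (B : Set (List ℕ)) (A : Set (ℕ → ℕ)) : Prop :=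
  ∃ (f : List ℕ → ℕ → List ℕ) (ν : List ℕ → ℕ → (ℕ → ℕ)),
    (∀ s ∈ B, IsForking (f s)) ∧
    A = { σ : ℕ → ℕ | ∃ s ∈ B, ∃ n : ℕ, σ = seqAppend (s ++ f s n) (ν s n) }

/-- The hierarchy of infinite broom sets: `A ∈ A_α` iff `A` is a broom-extension of some
`B ∈ B_α`. -/
def IsBroomA (α : Ordinal.{0}) (A : Set (ℕ → ℕ)) : Prop :=
  ∃ B : Set (List ℕ), IsBroomB α B ∧ IsBroomExtension B A

/-- `u` is a finite initial segment of the infinite sequence `σ`. -/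
def InfExtends (u : List ℕ) (σ : ℕ → ℕ) : Prop := seqPrefix σ u.length = u

/-- The tree of all finite initial segments of members of a set of infinite sequences. -/
def clTrInf (S : Set (ℕ → ℕ)) : Set (List ℕ) := { u | ∃ σ ∈ S, InfExtends u σ }

/-- The broom space `T_𝒜` on `ω^ω ∪ {∞}` (with `∞ = none`): every point of `ω^ω` is
isolated, and the neighborhood subbasis at `∞` consists of the complements of single
points of `ω^ω` and of the complements of the sets `A ∈ 𝒜`. -/
def broomTop (𝒜 : Set (Set (ℕ → ℕ))) : TopologicalSpace (Option (ℕ → ℕ)) :=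
  TopologicalSpace.generateFrom
    ({ S | ∃ σ : ℕ → ℕ, S = {Option.some σ} } ∪
     { S | ∃ σ : ℕ → ℕ, S = insert Option.none (Option.some '' ({σ}ᶜ)) } ∪
     { S | ∃ A ∈ 𝒜, S = insert Option.none (Option.some '' Aᶜ) })


/-! `V_F` is the preimage of `F` under the continuous projection `Z(W, Z) → W` that collapses
each `Z i` to `i`, and every class `F_α` is stable under continuous preimages; this gives (a).
For (b), `C ↦ Z(W, C)` sends families of closed sets to closed sets (each `Z i` is open in the
zoom space) and commutes with countable unions, countable intersections and the Suslin
operation. The induction on `α` only has to choose the witnesses for all `C i` at once: indexing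
them by pairs `(n, β)` with `β < α`, padded with `univ` (resp. `∅`) where the `n`-th witness
does not live at level `β`, makes the index set the same countable set for every `i`. -/

theorem countable_Iio_of_lt_omega1 {a : Ordinal.{0}} (ha : a < omega1) : Countable (Iio a) := by
  rw [← Cardinal.mk_le_aleph0_iff, Cardinal.mk_Iio_ordinal, Cardinal.lift_le_aleph0,
    ← Cardinal.lt_aleph_one_iff, ← Cardinal.lt_omega_iff_card_lt]
  exact ha

section FBorelClosure

variable {Y : Type*} [TopologicalSpace Y] {a : Ordinal.{0}}

theorem FBorel_eq (a : Ordinal.{0}) :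
    FBorel Y a =
      if a = 0 then { F | IsClosed F }
      else if EvenOrd a then
        { S | ∃ f : ℕ → Set Y, (∀ n, ∃ b, ∃ _ : b < a, f n ∈ FBorel Y b) ∧ S = ⋂ n, f n }
      else
        { S | ∃ f : ℕ → Set Y, (∀ n, ∃ b, ∃ _ : b < a, f n ∈ FBorel Y b) ∧ S = ⋃ n, f n } := by
  rw [FBorel, WellFounded.fix_eq]

theorem mem_FBorel_zero_iff {S : Set Y} : S ∈ FBorel Y 0 ↔ IsClosed S := by
  rw [FBorel_eq, if_pos rfl]
  exact Iff.rfl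

theorem mem_FBorel_of_isClosed {F : Set Y} (hF : IsClosed F) (a : Ordinal.{0}) :
    F ∈ FBorel Y a := by
  have h0 : F ∈ FBorel Y 0 := mem_FBorel_zero_iff.2 hF
  rw [FBorel_eq]
  split_ifs with ha
  · exact hF
  · exact ⟨fun _ => F, fun _ => ⟨0, pos_iff_ne_zero.2 ha, h0⟩, (iInter_const F).symm⟩
  · exact ⟨fun _ => F, fun _ => ⟨0, pos_iff_ne_zero.2 ha, h0⟩, (iUnion_const F).symm⟩

theorem iInter_mem_FBorel {ι : Sort*} [Countable ι] [Nonempty ι] (h0 : a ≠ 0)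
    (he : EvenOrd a) {f : ι → Set Y} (hf : ∀ i, ∃ b < a, f i ∈ FBorel Y b) :
    ⋂ i, f i ∈ FBorel Y a := by
  obtain ⟨e, he_surj⟩ := exists_surjective_nat ι
  rw [FBorel_eq, if_neg h0, if_pos he]
  exact ⟨f ∘ e, fun n => (hf (e n)).imp fun _ hb => ⟨hb.1, hb.2⟩,
    (he_surj.iInter_comp f).symm⟩

theorem iUnion_mem_FBorel {ι : Sort*} [Countable ι] [Nonempty ι] (h0 : a ≠ 0)
    (he : ¬ EvenOrd a) {f : ι → Set Y} (hf : ∀ i, ∃ b < a, f i ∈ FBorel Y b) :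
    ⋃ i, f i ∈ FBorel Y a := by
  obtain ⟨e, he_surj⟩ := exists_surjective_nat ι
  rw [FBorel_eq, if_neg h0, if_neg he]
  exact ⟨f ∘ e, fun n => (hf (e n)).imp fun _ hb => ⟨hb.1, hb.2⟩,
    (he_surj.iUnion_comp f).symm⟩

theorem exists_eq_iInter_of_mem_FBorel (h0 : a ≠ 0) (he : EvenOrd a) {S : Set Y}
    (hS : S ∈ FBorel Y a) :
    ∃ G : ℕ × Iio a → Set Y, (∀ p, G p ∈ FBorel Y p.2) ∧ S = ⋂ p, G p := by
  rw [FBorel_eq, if_neg h0, if_pos he] at hS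
  obtain ⟨f, hf, rfl⟩ := hS
  refine ⟨fun p => if f p.1 ∈ FBorel Y p.2 then f p.1 else univ, fun p => ?_, ?_⟩
  · dsimp only
    split_ifs with h
    exacts [h, mem_FBorel_of_isClosed isClosed_univ _]
  · refine subset_antisymm (fun x hx => mem_iInter.2 fun p => ?_)
      fun x hx => mem_iInter.2 fun n => ?_
    · split_ifs
      exacts [mem_iInter.1 hx p.1, mem_univ x]
    · obtain ⟨b, hb, hfb⟩ := hf n
      simpa [hfb] using mem_iInter.1 hx (n, ⟨b, hb⟩)

theorem exists_eq_iUnion_of_mem_FBorel (h0 : a ≠ 0) (he : ¬ EvenOrd a) {S : Set Y}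
    (hS : S ∈ FBorel Y a) :
    ∃ G : ℕ × Iio a → Set Y, (∀ p, G p ∈ FBorel Y p.2) ∧ S = ⋃ p, G p := by
  rw [FBorel_eq, if_neg h0, if_neg he] at hS
  obtain ⟨f, hf, rfl⟩ := hS
  refine ⟨fun p => if f p.1 ∈ FBorel Y p.2 then f p.1 else ∅, fun p => ?_, ?_⟩
  · dsimp only
    split_ifs with h
    exacts [h, mem_FBorel_of_isClosed isClosed_empty _]
  · refine subset_antisymm (fun x hx => ?_) fun x hx => ?_
    · obtain ⟨n, hn⟩ := mem_iUnion.1 hx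
      obtain ⟨b, hb, hfb⟩ := hf n
      exact mem_iUnion.2 ⟨(n, ⟨b, hb⟩), by simpa [hfb] using hn⟩
    · obtain ⟨p, hp⟩ := mem_iUnion.1 hx
      split_ifs at hp
      exacts [mem_iUnion.2 ⟨p.1, hp⟩, absurd hp (notMem_empty x)]

variable {X : Type*} [TopologicalSpace X] {π : X → Y}

theorem preimage_mem_FBorel (hπ : Continuous π) {F : Set Y} (hF : F ∈ FBorel Y a) :
    π ⁻¹' F ∈ FBorel X a := by
  induction a using WellFoundedLT.induction generalizing F with
  | ind a ih =>
  rw [FBorel_eq] at hF ⊢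
  split_ifs at hF ⊢
  · exact hF.preimage hπ
  all_goals
    obtain ⟨f, hf, rfl⟩ := hF
    refine ⟨fun n => π ⁻¹' f n, fun n => ?_, by simp only [preimage_iInter, preimage_iUnion]⟩
    obtain ⟨b, hb, hfb⟩ := hf n
    exact ⟨b, hb, ih b hb hfb⟩

theorem preimage_mem_SuslinF (hπ : Continuous π) {F : Set Y} (hF : F ∈ SuslinF Y) :
    π ⁻¹' F ∈ SuslinF X := by
  obtain ⟨C, hC, rfl⟩ := hF
  exact ⟨fun s => π ⁻¹' C s, fun s => (hC s).preimage hπ,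
    by simp only [suslinOp, preimage_iUnion, preimage_iInter]⟩

theorem preimage_mem_FClass (hπ : Continuous π) {F : Set Y} (hF : F ∈ FClass Y a) :
    π ⁻¹' F ∈ FClass X a := by
  rw [FClass] at hF ⊢
  split_ifs at hF ⊢
  exacts [preimage_mem_FBorel hπ hF, preimage_mem_SuslinF hπ hF]

end FBorelClosure

def zoomProj (W : Type*) [TopologicalSpace W] (Zf : IsolPts W → Type*) : ZoomCarrier W Zf → W :=
  Sum.elim Subtype.val fun p => p.1

section Zoom

variable {W : Type*} [TopologicalSpace W] {Zf : IsolPts W → Type*}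

theorem mem_zoomSub {Ys : Set W} {A : ∀ i, Set (Zf i)} {z : ZoomCarrier W Zf} :
    z ∈ zoomSub W Zf Ys A ↔ Sum.elim (fun y => y.1 ∈ Ys) (fun p => p.2 ∈ A p.1) z :=
  Iff.rfl

theorem zoomVSet_eq_preimage (U : Set W) : zoomVSet W Zf U = zoomProj W Zf ⁻¹' U := by
  ext (_ | _) <;> rfl

theorem compl_zoomSub_univ (C : ∀ i, Set (Zf i)) :
    (zoomSub W Zf univ C)ᶜ = zoomSub W Zf ∅ fun i => (C i)ᶜ := by
  ext z
  simp only [mem_compl_iff, mem_zoomSub]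
  cases z <;> simp

theorem zoomSub_univ_iInter {ι : Sort*} (C : ι → ∀ i, Set (Zf i)) :
    zoomSub W Zf univ (fun i => ⋂ n, C n i) = ⋂ n, zoomSub W Zf univ (C n) := by
  ext z
  simp only [mem_iInter, mem_zoomSub]
  cases z <;> simp

theorem zoomSub_univ_iUnion {ι : Sort*} [Nonempty ι] (C : ι → ∀ i, Set (Zf i)) :
    zoomSub W Zf univ (fun i => ⋃ n, C n i) = ⋃ n, zoomSub W Zf univ (C n) := by
  ext z
  simp only [mem_iUnion, mem_zoomSub]
  cases z <;> simp

theorem zoomSub_univ_suslinOp (D : ∀ i, List ℕ → Set (Zf i)) :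
    zoomSub W Zf univ (fun i => suslinOp (D i)) =
      suslinOp fun s => zoomSub W Zf univ fun i => D i s := by
  ext z
  simp only [suslinOp, mem_iUnion, mem_iInter, mem_zoomSub]
  cases z <;> simp

variable [∀ i, TopologicalSpace (Zf i)]

theorem continuous_zoomProj : Continuous (zoomProj W Zf) :=
  continuous_def.2 fun U hU => zoomVSet_eq_preimage (Zf := Zf) U ▸
    TopologicalSpace.isOpen_generateFrom_of_mem (Or.inr ⟨U, hU, rfl⟩)

theorem isOpen_image_zoom_inr (i : IsolPts W) {V : Set (Zf i)} (hV : IsOpen V) :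
    IsOpen (Sum.inr '' (Sigma.mk i '' V) : Set (ZoomCarrier W Zf)) :=
  TopologicalSpace.isOpen_generateFrom_of_mem (Or.inl ⟨i, V, hV, rfl⟩)

theorem isOpen_zoomSub_empty {A : ∀ i, Set (Zf i)} (hA : ∀ i, IsOpen (A i)) :
    IsOpen (zoomSub W Zf ∅ A) := by
  refine isOpen_iff_forall_mem_open.2 fun z hz => ?_
  rcases z with y | ⟨i, x⟩
  · exact hz.elim
  · refine ⟨_, ?_, isOpen_image_zoom_inr i (hA i), mem_image_of_mem _ (mem_image_of_mem _ hz)⟩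
    rintro _ ⟨_, ⟨x', hx', rfl⟩, rfl⟩
    exact hx'

theorem isClosed_zoomSub_univ {C : ∀ i, Set (Zf i)} (hC : ∀ i, IsClosed (C i)) :
    IsClosed (zoomSub W Zf univ C) := by
  rw [← isOpen_compl_iff, compl_zoomSub_univ]
  exact isOpen_zoomSub_empty fun i => (hC i).isOpen_compl

theorem zoomSub_univ_mem_FBorel {a : Ordinal.{0}} (ha : a < omega1) {C : ∀ i, Set (Zf i)}
    (hC : ∀ i, C i ∈ FBorel (Zf i) a) : zoomSub W Zf univ C ∈ FBorel (ZoomCarrier W Zf) a := by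
  induction a using WellFoundedLT.induction generalizing C with
  | ind a ih =>
  rcases eq_or_ne a 0 with rfl | h0
  · exact mem_FBorel_zero_iff.2 (isClosed_zoomSub_univ fun i => mem_FBorel_zero_iff.1 (hC i))
  have : Countable (Iio a) := countable_Iio_of_lt_omega1 ha
  have : Nonempty (ℕ × Iio a) := ⟨(0, ⟨0, pos_iff_ne_zero.2 h0⟩)⟩
  have levels : ∀ G : ∀ i, ℕ × Iio a → Set (Zf i), (∀ i p, G i p ∈ FBorel (Zf i) p.2) →
      ∀ p, ∃ b < a, zoomSub W Zf univ (fun i => G i p) ∈ FBorel (ZoomCarrier W Zf) b :=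
    fun G hG p => ⟨p.2, p.2.2, ih p.2 p.2.2 (p.2.2.trans ha) fun i => hG i p⟩
  by_cases he : EvenOrd a
  · choose G hG hCG using fun i => exists_eq_iInter_of_mem_FBorel h0 he (hC i)
    rw [funext hCG, zoomSub_univ_iInter fun p i => G i p]
    exact iInter_mem_FBorel h0 he (levels G hG)
  · choose G hG hCG using fun i => exists_eq_iUnion_of_mem_FBorel h0 he (hC i)
    rw [funext hCG, zoomSub_univ_iUnion fun p i => G i p]
    exact iUnion_mem_FBorel h0 he (levels G hG)

theorem zoomSub_univ_mem_SuslinF {C : ∀ i, Set (Zf i)} (hC : ∀ i, C i ∈ SuslinF (Zf i)) :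
    zoomSub W Zf univ C ∈ SuslinF (ZoomCarrier W Zf) := by
  choose D hD hCD using hC
  rw [funext hCD, zoomSub_univ_suslinOp]
  exact ⟨_, fun s => isClosed_zoomSub_univ fun i => hD i s, rfl⟩

theorem zoomSub_univ_mem_FClass {a : Ordinal.{0}} {C : ∀ i, Set (Zf i)}
    (hC : ∀ i, C i ∈ FClass (Zf i) a) : zoomSub W Zf univ C ∈ FClass (ZoomCarrier W Zf) a := by
  simp only [FClass] at hC ⊢
  split_ifs at hC ⊢ with ha
  exacts [zoomSub_univ_mem_FBorel ha hC, zoomSub_univ_mem_SuslinF hC]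

end Zoom

theorem zoom_basic_sets_complexity_general (W : Type u) [TopologicalSpace W]
    (Zf : IsolPts W → Type u) [∀ i, TopologicalSpace (Zf i)] (α : Ordinal.{0}) :
    (∀ F : Set W, F ∈ FClass W α → zoomVSet W Zf F ∈ FClass (ZoomCarrier W Zf) α) ∧
    (∀ C : (i : IsolPts W) → Set (Zf i), (∀ i, C i ∈ FClass (Zf i) α) →
      zoomSub W Zf Set.univ C ∈ FClass (ZoomCarrier W Zf) α) :=
  ⟨fun F hF => zoomVSet_eq_preimage F ▸ preimage_mem_FClass continuous_zoomProj hF,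
    fun _ hC => zoomSub_univ_mem_FClass hC⟩

/-- In a zoom space `Z(W, Z)`: (a) if `F ∈ F_α(W)` then
`V_F ∈ F_α(Z(W, Z))`; (b) if `C i ∈ F_α(Z i)` for every isolated point `i` of `W`, then
the zoom space `Z(W, C)` (as a subset of `Z(W, Z)`) is in `F_α(Z(W, Z))`. -/
theorem zoom_basic_sets_complexity (W : Type u) [TopologicalSpace W] [T35Space W]
    (Zf : IsolPts W → Type u) [∀ i, TopologicalSpace (Zf i)] [∀ i, T35Space (Zf i)]
    [∀ i, Nonempty (Zf i)] (α : Ordinal.{0}) (hα : α ≤ omega1) :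
    (∀ F : Set W, F ∈ FClass W α → zoomVSet W Zf F ∈ FClass (ZoomCarrier W Zf) α) ∧
    (∀ C : (i : IsolPts W) → Set (Zf i), (∀ i, C i ∈ FClass (Zf i) α) →
      zoomSub W Zf Set.univ C ∈ FClass (ZoomCarrier W Zf) α) :=
  zoom_basic_sets_complexity_general W Zf α

end FBorelPaper
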